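/- arXiv:1911.00509 — 6 statements merged into one kernel-verified Lean document; each statement's English description precedes it below -/
import Mathlib

section
/- There exists a Borel set S ⊆ [0,1]^ℕ of full measure with respect to the infinite product of Lebesgue measure such that for any two points x = (x_1, x_2, …) and y = (y_1, y_2, …) in S, if for all indices i, j one has x_i < x_j ⟺ y_i < y_j, then x = y. (Almost every point of the infinite-dimensional cube is uniquely determined by the list of all pairwise inequalities between its coordinates.) -/
open MeasureTheory unitInterval

/-- The infinite product of Lebesgue measures on `[0,1]^ℕ`, characterized as the projective
limit of the finite-dimensional product Lebesgue measures. -/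
def IsProductLebesgue (μ : Measure (ℕ → I)) : Prop :=
  IsProjectiveLimit μ (fun J : Finset ℕ => Measure.pi fun _ : J => (volume : Measure I))

/-!
By the strong law of large numbers, for a typical point `x` and every `a` in a countable dense
set `D ⊆ [0,1]`, the proportion of the first `n` coordinates of `x` lying below `a` tends to `a`.
This proportion is read off the order relations among the coordinates: if `x` and `y` have the
same order relations and `x i < c₁ < c₂ < y i` with `c₁, c₂ ∈ D`, then every `y j < c₂` lies below
`y i`, hence `x j < x i < c₁`, so the frequency of `y` below `c₂` never exceeds that of `x` below
`c₁`; in the limit `c₂ ≤ c₁`, a contradiction.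
-/

open Filter Topology Set ProbabilityTheory

noncomputable def frequency {α : Type*} (s : Set α) (x : ℕ → α) (n : ℕ) : ℝ :=
  (∑ j ∈ Finset.range n, s.indicator 1 (x j)) / n

theorem measurable_frequency {α : Type*} [MeasurableSpace α] {s : Set α} (hs : MeasurableSet s)
    (n : ℕ) : Measurable fun x : ℕ → α => frequency s x n :=
  (Finset.measurable_sum _ fun j _ =>
    (measurable_const.indicator hs).comp (measurable_pi_apply j)).div_const _

theorem frequency_mono {α β : Type*} {s : Set α} {t : Set β} {x : ℕ → α} {y : ℕ → β}
    (h : ∀ j, x j ∈ s → y j ∈ t) (n : ℕ) : frequency s x n ≤ frequency t y n := by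
  refine div_le_div_of_nonneg_right (Finset.sum_le_sum fun j _ => ?_) n.cast_nonneg
  by_cases hj : x j ∈ s
  · simp [indicator_of_mem hj, indicator_of_mem (h j hj)]
  · simp only [indicator_of_notMem hj]
    exact indicator_nonneg (fun _ _ => zero_le_one) _

theorem ae_tendsto_frequency_infinitePi {α : Type*} [MeasurableSpace α] (ν : Measure α)
    [IsProbabilityMeasure ν] {s : Set α} (hs : MeasurableSet s) :
    ∀ᵐ x ∂Measure.infinitePi (fun _ : ℕ => ν), Tendsto (frequency s x) atTop (𝓝 (ν.real s)) := by
  set P := Measure.infinitePi fun _ : ℕ => ν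
  have hf : Measurable (s.indicator (1 : α → ℝ)) := measurable_const.indicator hs
  have hcoord : ∀ j, MeasurePreserving (fun x : ℕ → α => x j) P ν :=
    measurePreserving_eval_infinitePi _
  have hint : Integrable (fun x : ℕ → α => s.indicator (1 : α → ℝ) (x 0)) P :=
    (hcoord 0).integrable_comp_of_integrable ((integrable_const 1).indicator hs)
  have hindep : Pairwise fun i j => IndepFun
      (fun x : ℕ → α => s.indicator (1 : α → ℝ) (x i)) (fun x => s.indicator 1 (x j)) P :=
    fun _ _ hij => (iIndepFun_infinitePi (fun _ => hf)).indepFun hij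
  have hident : ∀ j, IdentDistrib
      (fun x : ℕ → α => s.indicator (1 : α → ℝ) (x j)) (fun x => s.indicator 1 (x 0)) P P :=
    fun j => (IdentDistrib.mk (hcoord j).measurable.aemeasurable
      (hcoord 0).measurable.aemeasurable ((hcoord j).map_eq.trans (hcoord 0).map_eq.symm)).comp hf
  have hmean : ∫ x, s.indicator (1 : α → ℝ) (x 0) ∂P = ν.real s := by
    rw [← integral_map (hcoord 0).aemeasurable hf.aestronglyMeasurable, (hcoord 0).map_eq,
      integral_indicator_one hs]
  rw [← hmean]
  exact strong_law_ae_real _ hint hindep hident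

theorem IsProductLebesgue.eq_infinitePi {μ : Measure (ℕ → I)} (hμ : IsProductLebesgue μ) :
    μ = Measure.infinitePi fun _ => volume :=
  hμ.unique (Measure.isProjectiveLimit_infinitePi _)

section OrderPattern

variable {α : Type*} [LinearOrder α] {x y : ℕ → α}

theorem frequency_Iio_le_of_lt_iff_lt (hxy : ∀ i j, x i < x j ↔ y i < y j) {i : ℕ} {a b : α}
    (ha : x i < a) (hb : b ≤ y i) (n : ℕ) : frequency (Iio b) y n ≤ frequency (Iio a) x n :=
  frequency_mono (fun j hj => ((hxy j i).2 (lt_of_lt_of_le hj hb)).trans ha) n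

variable [TopologicalSpace α] [OrderClosedTopology α] [DenselyOrdered α] {D : Set α} {F : α → ℝ}

theorem le_of_lt_iff_lt_of_tendsto_frequency (hD : Dense D) (hF : StrictMonoOn F D)
    (hx : ∀ a ∈ D, Tendsto (frequency (Iio a) x) atTop (𝓝 (F a)))
    (hy : ∀ a ∈ D, Tendsto (frequency (Iio a) y) atTop (𝓝 (F a)))
    (hxy : ∀ i j, x i < x j ↔ y i < y j) (i : ℕ) : y i ≤ x i := by
  by_contra! hlt
  obtain ⟨c₁, hc₁, hxc₁, hc₁y⟩ := hD.exists_between hlt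
  obtain ⟨c₂, hc₂, hc₁c₂, hc₂y⟩ := hD.exists_between hc₁y
  have : F c₂ ≤ F c₁ := le_of_tendsto_of_tendsto' (hy c₂ hc₂) (hx c₁ hc₁)
    (frequency_Iio_le_of_lt_iff_lt hxy hxc₁ hc₂y.le)
  exact (hF hc₁ hc₂ hc₁c₂).not_ge this

theorem eq_of_lt_iff_lt_of_tendsto_frequency (hD : Dense D) (hF : StrictMonoOn F D)
    (hx : ∀ a ∈ D, Tendsto (frequency (Iio a) x) atTop (𝓝 (F a)))
    (hy : ∀ a ∈ D, Tendsto (frequency (Iio a) y) atTop (𝓝 (F a)))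
    (hxy : ∀ i j, x i < x j ↔ y i < y j) : x = y :=
  funext fun i => le_antisymm
    (le_of_lt_iff_lt_of_tendsto_frequency hD hF hy hx (fun i j => (hxy i j).symm) i)
    (le_of_lt_iff_lt_of_tendsto_frequency hD hF hx hy hxy i)

end OrderPattern

/-- Almost every point of the infinite-dimensional cube is uniquely determined by the list of
all pairwise inequalities between its coordinates: there is a Borel set of full measure on which
"same order relations" implies equality. -/
theorem exists_full_measure_set_order_relations_determine_point
    (μ : Measure (ℕ → I)) (hμ : IsProductLebesgue μ) :
    ∃ S : Set (ℕ → I), MeasurableSet S ∧ μ Sᶜ = 0 ∧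
      ∀ x ∈ S, ∀ y ∈ S, (∀ i j : ℕ, x i < x j ↔ y i < y j) → x = y := by
  obtain ⟨D, hDc, hD⟩ := TopologicalSpace.exists_countable_dense I
  set S := {x : ℕ → I | ∀ a ∈ D, Tendsto (frequency (Iio a) x) atTop (𝓝 (a : ℝ))}
  have hS : MeasurableSet S := by
    simp only [S, ofPred_forall]
    exact .biInter hDc fun a _ =>
      measurableSet_tendsto _ (measurable_frequency measurableSet_Iio)
  have hae : ∀ᵐ x ∂μ, x ∈ S := by
    refine (ae_ball_iff hDc).2 fun a _ => ?_
    simpa [hμ.eq_infinitePi, measureReal_def, volume_Iio, a.2.1] using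
      ae_tendsto_frequency_infinitePi (volume : Measure I) (measurableSet_Iio (a := a))
  exact ⟨S, hS, mem_ae_iff.1 hae, fun x hx y hy =>
    eq_of_lt_iff_lt_of_tendsto_frequency hD ((Subtype.strictMono_coe _).strictMonoOn _) hx hy⟩
end

section
/- Let J : [0,1]^ℕ → ∏_{n≥1} {0,1,…,n−1} be the map J(x) = (t_n(x))_{n≥1}, where t_n(x) = #{k ≤ n : x_k < x_n}. Then J is measurable and the pushforward of the product Lebesgue measure m^∞ under J equals the product measure μ = ∏_{n≥1} (uniform measure on {0,1,…,n−1}). Equivalently, the random variables t_1, t_2, t_3, … are mutually independent and t_n is uniform on {0,…,n−1}. -/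
open MeasureTheory unitInterval

/-- `tCode x n = #{k < n : x k < x n}` is, in 0-based indexing, the quantity
`t_{n+1}(x) = #{k ≤ n+1 : x_k < x_{n+1}}` of the paper; it takes values in `{0, 1, …, n}`. -/
noncomputable def tCode (x : ℕ → I) (n : ℕ) : ℕ :=
  ((Finset.range n).filter fun k => (x k : ℝ) < (x n : ℝ)).card

/-- The combinatorial encoding `J : [0,1]^ℕ → 𝔐 = ∏_n {0,…,n}`, `J(x) = (t_n(x))_n`. -/
noncomputable def JCode (x : ℕ → I) (n : ℕ) : Fin (n + 1) :=
  ⟨tCode x n, Nat.lt_succ_of_le ((Finset.card_filter_le _ _).trans (Finset.card_range n).le)⟩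

/-- The uniform probability measure on `{0, 1, …, n}`. -/
noncomputable def uniformFin (n : ℕ) : Measure (Fin (n + 1)) :=
  (PMF.uniformOfFintype (Fin (n + 1))).toMeasure

/-!
Almost surely the coordinates `y_0, …, y_N` of a sample of an atomless law are distinct, and then
the codes `t_0, …, t_N` depend only on their relative order, i.e. on the permutation `π` with
`y_i < y_j ↔ π i < π j`. The code determines the permutation (`t_n` together with the relative
order of `y_0, …, y_{n-1}` determines that of `y_0, …, y_n`), so `π ↦ (t_n)_n` is a bijection
between the `(N+1)!` permutations and the `(N+1)!` code tuples. Permuting coordinates preserves the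
product measure, so all order classes, hence all code tuples, are equally likely: the law of
`(t_0, …, t_N)` is uniform on `∏_n {0, …, n}`, which is the product of the uniform laws.
-/

open Finset

section LehmerCode

variable {ι α β : Type*} [LinearOrder α] [LinearOrder β]

theorem lt_iff_lt_of_lt_iff_lt_swap {y : ι → α} {y' : ι → β} (hy : Function.Injective y)
    (hy' : Function.Injective y') {i j : ι} (h : y j < y i ↔ y' j < y' i) :
    y i < y j ↔ y' i < y' j := by
  rw [← not_iff_not, not_lt, not_lt, le_iff_lt_or_eq, le_iff_lt_or_eq, h, hy.eq_iff, hy'.eq_iff]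

variable [Fintype ι] [LinearOrder ι]

def lehmerCode (y : ι → α) (i : ι) : ℕ := #{k | k < i ∧ y k < y i}

theorem lehmerCode_congr {y : ι → α} {y' : ι → β} (h : ∀ i j, y i < y j ↔ y' i < y' j) :
    lehmerCode y = lehmerCode y' := by
  funext i
  simp only [lehmerCode, h]

theorem lt_iff_card_lt_lehmerCode {y : ι → α} (hy : Function.Injective y) {i j : ι}
    (hji : j < i) : y j < y i ↔ #{k | k < i ∧ y k < y j} < lehmerCode y i := by
  constructor
  · intro hlt
    refine card_lt_card ⟨fun k hk => ?_, fun hsub => ?_⟩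
    · simp only [mem_filter, mem_univ, true_and] at hk ⊢
      exact ⟨hk.1, hk.2.trans hlt⟩
    · simpa using hsub (by simp [hji, hlt] : j ∈ _)
  · intro hcard
    by_contra hle
    have hgt : y i < y j := lt_of_le_of_ne (not_lt.1 hle) (hy.ne hji.ne')
    refine hcard.not_ge (card_le_card fun k hk => ?_)
    simp only [mem_filter, mem_univ, true_and] at hk ⊢
    exact ⟨hk.1, hk.2.trans hgt⟩

theorem lt_iff_lt_of_lehmerCode_eq {y : ι → α} {y' : ι → β} (hy : Function.Injective y)
    (hy' : Function.Injective y') (h : lehmerCode y = lehmerCode y') (i j : ι) :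
    y i < y j ↔ y' i < y' j := by
  have below : ∀ i, ∀ j < i, (y j < y i ↔ y' j < y' i) := by
    intro i
    induction i using WellFoundedLT.induction with
    | _ i ih =>
      intro j hji
      have hcount : univ.filter (fun k => k < i ∧ y k < y j) =
          univ.filter (fun k => k < i ∧ y' k < y' j) := by
        refine filter_congr fun k _ => and_congr_right fun hki => ?_
        rcases lt_trichotomy k j with hkj | rfl | hjk
        · exact ih j hji k hkj
        · simp
        · exact lt_iff_lt_of_lt_iff_lt_swap hy hy' (ih k hki j hjk)
      rw [lt_iff_card_lt_lehmerCode hy hji, lt_iff_card_lt_lehmerCode hy' hji, hcount, h]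
  rcases lt_trichotomy i j with hij | rfl | hji
  · exact below j i hij
  · simp
  · exact lt_iff_lt_of_lt_iff_lt_swap hy hy' (below i j hji)

theorem Equiv.Perm.eq_of_lt_iff_lt {π ρ : Equiv.Perm ι} (h : ∀ i j, π i < π j ↔ ρ i < ρ j) :
    π = ρ := by
  let e : ι ≃o ι :=
    ⟨π.symm.trans ρ, fun {a b} => by simpa [not_lt] using (h (π.symm b) (π.symm a)).not.symm⟩
  ext i
  simpa [e] using (congrArg (fun e : ι ≃o ι => e (π i)) (Subsingleton.elim e (OrderIso.refl ι))).symm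

theorem lehmerCode_injective_perm : Function.Injective fun π : Equiv.Perm ι => lehmerCode π :=
  fun _ _ h => Equiv.Perm.eq_of_lt_iff_lt
    (lt_iff_lt_of_lehmerCode_eq (Equiv.injective _) (Equiv.injective _) h)

def orderClass (π : Equiv.Perm ι) : Set (ι → α) := {y | ∀ i j, y i < y j ↔ π i < π j}

theorem exists_mem_orderClass {y : ι → α} (hy : Function.Injective y) :
    ∃ π : Equiv.Perm ι, y ∈ orderClass π := by
  classical
  let e : Set.range y ≃o ι :=
    (Fintype.orderIsoFinOfCardEq _ (Fintype.card_congr (Equiv.ofInjective y hy)).symm).symm.trans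
      (Fintype.orderIsoFinOfCardEq ι rfl)
  refine ⟨(Equiv.ofInjective y hy).trans e.toEquiv, fun i j => ?_⟩
  simp only [Equiv.trans_apply, OrderIso.coe_toEquiv, e.lt_iff_lt]
  rfl

end LehmerCode

theorem MeasureTheory.Measure.prod_diagonal_eq_zero {α : Type*} [MeasurableSpace α]
    [MeasurableEq α] (μ ν : Measure α) [SFinite ν] [NullSingletonClass ν] :
    (μ.prod ν) (Set.diagonal α) = 0 := by
  rw [prod_apply measurableSet_diagonal]
  simp [Set.preimage, Set.diagonal]

theorem MeasureTheory.Measure.eq_of_measure_singleton_const {β : Type*} [Fintype β]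
    [MeasurableSpace β] [MeasurableSingletonClass β] {μ ν : Measure β} [IsProbabilityMeasure μ]
    [IsProbabilityMeasure ν] (hμ : ∀ a b, μ {a} = μ {b}) (hν : ∀ a b, ν {a} = ν {b}) :
    μ = ν := by
  refine ext_of_singleton fun a => ?_
  have card_mul : ∀ ρ : Measure β, IsProbabilityMeasure ρ → (∀ b, ρ {b} = ρ {a}) →
      (Fintype.card β : ENNReal) * ρ {a} = 1 := by
    intro ρ _ hρ
    rw [← measure_univ (μ := ρ), ← Finset.coe_univ, ← sum_measure_singleton,
      Finset.sum_congr rfl fun b _ => hρ b, Finset.sum_const, nsmul_eq_mul, Finset.card_univ]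
  have : Nonempty β := ⟨a⟩
  have hcard : (Fintype.card β : ENNReal) ≠ 0 := by simp
  exact (ENNReal.mul_right_inj hcard (ENNReal.natCast_ne_top _)).1
    ((card_mul μ ‹_› fun b => hμ b a).trans (card_mul ν ‹_› fun b => hν b a).symm)

theorem ae_injective_pi {ι α : Type*} [Fintype ι] [MeasurableSpace α] [MeasurableEq α]
    (ν : Measure α) [IsProbabilityMeasure ν] [NullSingletonClass ν] :
    ∀ᵐ y ∂(Measure.pi fun _ : ι => ν), Function.Injective y := by
  have tie_null : ∀ i j, i ≠ j → (Measure.pi fun _ : ι => ν) {y | y i = y j} = 0 := by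
    intro i j hij
    have hind := (ProbabilityTheory.iIndepFun_pi (μ := fun _ : ι => ν) (X := fun _ => id)
      fun _ => aemeasurable_id).indepFun hij
    have hlaw := (ProbabilityTheory.indepFun_iff_map_prod_eq_prod_map_map
      (measurable_pi_apply i).aemeasurable (measurable_pi_apply j).aemeasurable).1 hind
    rw [(measurePreserving_eval _ i).map_eq, (measurePreserving_eval _ j).map_eq] at hlaw
    rw [← Measure.prod_diagonal_eq_zero ν ν, ← hlaw,
      Measure.map_apply (by fun_prop) measurableSet_diagonal]
    rfl
  have : ∀ i j, ∀ᵐ y ∂(Measure.pi fun _ : ι => ν), y i = y j → i = j := by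
    intro i j
    by_cases hij : i = j
    · simp [hij]
    · filter_upwards [measure_eq_zero_iff_ae_notMem.1 (tie_null i j hij)] with y hy hyij
      exact absurd hyij hy
  simpa only [Function.Injective, ae_all_iff] using this

section OrderClassMeasure

variable {ι α : Type*} [Fintype ι] [LinearOrder ι] [LinearOrder α] [MeasurableSpace α]

theorem measure_orderClass (ν : Measure α) [SigmaFinite ν] (π ρ : Equiv.Perm ι) :
    (Measure.pi fun _ : ι => ν) (orderClass π) = (Measure.pi fun _ : ι => ν) (orderClass ρ) := by
  have hpres := measurePreserving_arrowCongr' (fun _ => ν) (fun _ => ν) (ρ.trans π.symm)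
    (MeasurableEquiv.refl α) fun _ => MeasurePreserving.id ν
  rw [← hpres.measure_preimage_equiv]
  congr 1
  ext y
  simp only [orderClass, Set.mem_preimage, Set.mem_ofPred_eq, MeasurableEquiv.arrowCongr',
    Equiv.arrowCongr', Equiv.arrowCongr]
  exact ⟨fun h a b => by simpa using h (π.symm (ρ a)) (π.symm (ρ b)),
    fun h i j => by simpa using h (ρ.symm (π i)) (ρ.symm (π j))⟩

variable [TopologicalSpace α] [OrderClosedTopology α] [SecondCountableTopology α]
  [OpensMeasurableSpace α]

theorem measurable_lehmerCode (i : ι) : Measurable fun y : ι → α => lehmerCode y i := by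
  simp only [lehmerCode, card_filter]
  refine Finset.measurable_sum _ fun k _ => Measurable.ite ?_ measurable_const measurable_const
  exact (MeasurableSet.const _).inter
    (measurableSet_lt (measurable_pi_apply k) (measurable_pi_apply i))

variable (ν : Measure α) [IsProbabilityMeasure ν] [NullSingletonClass ν]

theorem lehmerCode_ae_eq_orderClass (π : Equiv.Perm ι) :
    {y : ι → α | lehmerCode y = lehmerCode π} =ᵐ[Measure.pi fun _ : ι => ν] orderClass π := by
  filter_upwards [ae_injective_pi ν] with y hy
  obtain ⟨ρ, hρ⟩ := exists_mem_orderClass hy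
  refine propext (?_ : lehmerCode y = lehmerCode π ↔ y ∈ orderClass π)
  rw [lehmerCode_congr hρ, lehmerCode_injective_perm.eq_iff]
  exact ⟨fun h => h ▸ hρ,
    fun hπ => Equiv.Perm.eq_of_lt_iff_lt fun i j => (hρ i j).symm.trans (hπ i j)⟩

theorem measure_lehmerCode_eq (π ρ : Equiv.Perm ι) :
    (Measure.pi fun _ : ι => ν) {y | lehmerCode y = lehmerCode π} =
      (Measure.pi fun _ : ι => ν) {y | lehmerCode y = lehmerCode ρ} := by
  rw [measure_congr (lehmerCode_ae_eq_orderClass ν π),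
    measure_congr (lehmerCode_ae_eq_orderClass ν ρ), measure_orderClass]

end OrderClassMeasure

instance (n : ℕ) : IsProbabilityMeasure (uniformFin n) := by
  unfold uniformFin
  infer_instance

theorem uniformFin_singleton_const (n : ℕ) (a b : Fin (n + 1)) :
    uniformFin n {a} = uniformFin n {b} := by
  simp [uniformFin]

section Iic

variable {α : Type*} [LinearOrder α]

theorem lehmerCode_le {N : ℕ} (y : Iic N → α) (j : Iic N) : lehmerCode y j ≤ j := by
  calc lehmerCode y j ≤ #(univ.filter fun k : Iic N => k < j) := card_le_card fun k hk => by
        simp only [mem_filter, mem_univ, true_and] at hk ⊢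
        exact hk.1
    _ ≤ #(range j) := card_le_card_of_injOn (fun k => (k : ℕ)) (fun k hk => by simpa using hk)
        Subtype.val_injective.injOn
    _ = j := card_range _

def lehmerCodeIic (N : ℕ) (y : Iic N → α) (j : Iic N) : Fin (j + 1) :=
  ⟨lehmerCode y j, Nat.lt_succ_of_le (lehmerCode_le y j)⟩

theorem lehmerCodeIic_inj {β : Type*} [LinearOrder β] {N : ℕ} {y : Iic N → α} {y' : Iic N → β} :
    lehmerCodeIic N y = lehmerCodeIic N y' ↔ lehmerCode y = lehmerCode y' := by
  simp only [lehmerCodeIic, funext_iff, Fin.ext_iff]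

theorem bijective_lehmerCodeIic_perm (N : ℕ) :
    Function.Bijective fun π : Equiv.Perm (Iic N) => lehmerCodeIic N π := by
  refine (Fintype.bijective_iff_injective_and_card _).2
    ⟨fun π ρ h => lehmerCode_injective_perm (lehmerCodeIic_inj.1 h), ?_⟩
  rw [Fintype.card_perm, Fintype.card_pi, Fintype.card_coe, Nat.card_Iic]
  simp only [Fintype.card_fin]
  rw [prod_coe_sort (Iic N) (· + 1), ← Nat.range_succ_eq_Iic, prod_range_add_one_eq_factorial]

variable [TopologicalSpace α] [OrderClosedTopology α] [SecondCountableTopology α]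
  [MeasurableSpace α] [OpensMeasurableSpace α]

theorem measurable_lehmerCodeIic (N : ℕ) : Measurable (lehmerCodeIic (α := α) N) := by
  refine measurable_pi_iff.2 fun j => measurable_to_countable' fun a => ?_
  have hfiber : (fun y : Iic N → α => lehmerCodeIic N y j) ⁻¹' {a} =
      (fun y => lehmerCode y j) ⁻¹' {(a : ℕ)} := by
    ext y
    simp [lehmerCodeIic, Fin.ext_iff]
  rw [hfiber]
  exact measurable_lehmerCode j (measurableSet_singleton _)

theorem map_lehmerCodeIic_pi (ν : Measure α) [IsProbabilityMeasure ν] [NullSingletonClass ν]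
    (N : ℕ) : (Measure.pi fun _ : Iic N => ν).map (lehmerCodeIic N) =
      Measure.pi fun j : Iic N => uniformFin j := by
  have hmeas := measurable_lehmerCodeIic (α := α) N
  have := Measure.isProbabilityMeasure_map (μ := Measure.pi fun _ : Iic N => ν) hmeas.aemeasurable
  refine Measure.eq_of_measure_singleton_const (fun a b => ?_) (fun a b => ?_)
  · obtain ⟨π, rfl⟩ := (bijective_lehmerCodeIic_perm N).2 a
    obtain ⟨ρ, rfl⟩ := (bijective_lehmerCodeIic_perm N).2 b
    simp only [Measure.map_apply hmeas (measurableSet_singleton _), Set.preimage,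
      Set.mem_singleton_iff, lehmerCodeIic_inj]
    exact measure_lehmerCode_eq ν π ρ
  · simp only [Measure.pi_singleton]
    exact prod_congr rfl fun j _ => uniformFin_singleton_const j _ _

end Iic

theorem tCode_eq_lehmerCode_restrict {N n : ℕ} (hn : n ∈ Iic N) (x : ℕ → I) :
    tCode x n = lehmerCode ((Iic N).restrict x) ⟨n, hn⟩ := by
  symm
  refine card_nbij (fun k => (k : ℕ)) (fun k hk => ?_) Subtype.val_injective.injOn fun k hk => ?_
  · simp only [coe_filter, mem_univ, true_and, Set.mem_ofPred_eq] at hk ⊢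
    exact ⟨mem_range.2 hk.1, hk.2⟩
  · simp only [coe_filter, mem_range, Set.mem_ofPred_eq] at hk
    refine ⟨⟨k, mem_Iic.2 (hk.1.le.trans (mem_Iic.1 hn))⟩, ?_, rfl⟩
    simp only [coe_filter, mem_univ, true_and, Set.mem_ofPred_eq]
    exact hk

theorem restrict_comp_JCode (N : ℕ) :
    (Iic N).restrict ∘ JCode = lehmerCodeIic N ∘ (Iic N).restrict :=
  funext fun x => funext fun j => Fin.ext (tCode_eq_lehmerCode_restrict j.2 x)

theorem measurable_JCode : Measurable JCode := by
  refine measurable_pi_iff.2 fun n => ?_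
  have hn : (fun x => JCode x n) =
      (fun c => c ⟨n, mem_Iic.2 le_rfl⟩) ∘ lehmerCodeIic n ∘ (Iic n).restrict :=
    congrArg (fun f x => f x ⟨n, mem_Iic.2 le_rfl⟩) (restrict_comp_JCode n)
  rw [hn]
  exact (measurable_pi_apply _).comp ((measurable_lehmerCodeIic n).comp (measurable_restrict _))

/-- The encoding `J(x) = (t_n(x))_n` is measurable and pushes the infinite product of
Lebesgue measures forward to the product of the uniform measures on the factors `{0,…,n}`
(the latter characterized as the projective limit of the finite products of uniform measures);
i.e. the `t_n` are mutually independent and `t_n` is uniform on `{0,…,n-1}`. -/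
theorem JCode_measurable_and_map_eq_product_uniform
    (μ : Measure (ℕ → I)) (hμ : IsProductLebesgue μ) :
    Measurable JCode ∧
      IsProjectiveLimit (μ.map JCode)
        (fun J : Finset ℕ => Measure.pi fun n : J => uniformFin n) := by
  refine ⟨measurable_JCode, fun J => ?_⟩
  rw [isProjectiveMeasureFamily_pi _ _ _ J.subset_Iic_sup_id,
    ← restrict₂_comp_restrict J.subset_Iic_sup_id,
    ← Measure.map_map (measurable_restrict₂ _) (measurable_restrict _),
    Measure.map_map (measurable_restrict _) measurable_JCode, restrict_comp_JCode,
    ← Measure.map_map (measurable_lehmerCodeIic _) (measurable_restrict _), hμ,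
    map_lehmerCodeIic_pi]
end

section
/- There exists a Borel set S ⊆ [0,1]^ℕ of full measure with respect to the infinite product of Lebesgue measure such that the map J(x) = (t_n(x))_{n≥1}, with t_n(x) = #{k ≤ n : x_k < x_n}, is injective on S. (The combinatorial encoding J distinguishes almost all points of the infinite-dimensional cube.) -/
open MeasureTheory unitInterval

/-!
Almost surely the coordinates are pairwise distinct, and by the strong law of large numbers the
proportion of the first `N` coordinates lying below a rational `q ∈ [0,1]` tends to `q`; by
monotonicity in the threshold this extends to every `a ∈ [0,1]`, in particular to `a = x n`.
For distinct coordinates the code `J x` determines the relative order of all coordinates (by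
induction on the index), hence the proportion of coordinates below `x n`. So if `J x = J y` for
two such points, `x n` and `y n` are limits of the same sequence.
-/

open Filter Finset Function ProbabilityTheory Topology

section LehmerCode

variable {α β : Type*} [LinearOrder α] [LinearOrder β]

theorem lt_iff_card_filter_lt_lt {ι : Type*} {s : Finset ι} {f : ι → α} {k : ι} (hk : k ∈ s)
    (b : α) : f k < b ↔ #{j ∈ s | f j < f k} < #{j ∈ s | f j < b} := by
  refine ⟨fun h => card_lt_card ⟨monotone_filter_right _ fun j _ hj => hj.trans h, fun hsub => ?_⟩,
    fun h => ?_⟩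
  · exact lt_irrefl _ (mem_filter.1 (hsub (mem_filter.2 ⟨hk, h⟩))).2
  · by_contra! hle
    exact h.not_ge (card_le_card (monotone_filter_right _ fun j _ hj => hj.trans_le hle))

theorem lt_iff_lt_symm_of_injective {ι : Type*} {x : ι → α} {y : ι → β} (hx : Injective x)
    (hy : Injective y) {j l : ι} (hjl : j ≠ l) (h : x j < x l ↔ y j < y l) :
    x l < x j ↔ y l < y j := by
  rw [← not_le, (hx.ne hjl).le_iff_lt, h, not_lt, (hy.ne hjl).symm.le_iff_lt]

theorem lt_iff_lt_of_card_filter_lt_eq {x : ℕ → α} {y : ℕ → β} (hx : Injective x)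
    (hy : Injective y) (h : ∀ n, #{k ∈ range n | x k < x n} = #{k ∈ range n | y k < y n})
    (j l : ℕ) : x j < x l ↔ y j < y l := by
  suffices H : ∀ n, ∀ j < n, ∀ l < n, (x j < x l ↔ y j < y l) from
    H (max j l + 1) j (by omega) l (by omega)
  intro n
  induction n with
  | zero => simp
  | succ n ih =>
    have last : ∀ k < n, (x k < x n ↔ y k < y n) := fun k hk => by
      rw [lt_iff_card_filter_lt_lt (mem_range.2 hk), lt_iff_card_filter_lt_lt (mem_range.2 hk),
        h n, filter_congr fun i hi => ih i (mem_range.1 hi) k hk]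
    intro j hj l hl
    rcases Nat.lt_succ_iff_lt_or_eq.1 hj with hj | rfl <;>
      rcases Nat.lt_succ_iff_lt_or_eq.1 hl with hl | rfl
    · exact ih j hj l hl
    · exact last j hj
    · exact lt_iff_lt_symm_of_injective hx hy hl.ne (last l hl)
    · simp

end LehmerCode

noncomputable def freqBelow (z : ℕ → ℝ) (N : ℕ) (a : ℝ) : ℝ :=
  #{k ∈ range N | z k < a} / N

theorem monotone_freqBelow (z : ℕ → ℝ) (N : ℕ) : Monotone (freqBelow z N) := fun a b hab => by
  unfold freqBelow
  gcongr

theorem freqBelow_mem_Icc (z : ℕ → ℝ) (N : ℕ) (a : ℝ) : freqBelow z N a ∈ Set.Icc 0 1 := by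
  refine ⟨by unfold freqBelow; positivity, div_le_one_of_le₀ ?_ N.cast_nonneg⟩
  exact_mod_cast (card_filter_le _ _).trans (card_range N).le

theorem eq_of_card_filter_lt_eq_of_tendsto_freqBelow {z w : ℕ → ℝ} (hz : Injective z)
    (hw : Injective w) (h : ∀ n, #{k ∈ range n | z k < z n} = #{k ∈ range n | w k < w n})
    (hzlim : ∀ n, Tendsto (freqBelow z · (z n)) atTop (𝓝 (z n)))
    (hwlim : ∀ n, Tendsto (freqBelow w · (w n)) atTop (𝓝 (w n))) : z = w := by
  funext n
  have hfreq : (freqBelow z · (z n)) = (freqBelow w · (w n)) := by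
    funext N
    simp only [freqBelow, filter_congr fun k _ => lt_iff_lt_of_card_filter_lt_eq hz hw h k n]
  exact tendsto_nhds_unique (hfreq ▸ hzlim n) (hwlim n)

theorem tendsto_of_monotone_of_tendsto_rat {F : ℕ → ℝ → ℝ} (hmono : ∀ N, Monotone (F N))
    (hF : ∀ N a, F N a ∈ Set.Icc 0 1)
    (hq : ∀ q : ℚ, (q : ℝ) ∈ Set.Icc 0 1 → Tendsto (F · q) atTop (𝓝 q)) {a : ℝ}
    (ha : a ∈ Set.Icc 0 1) : Tendsto (F · a) atTop (𝓝 a) := by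
  refine tendsto_order.2 ⟨fun b hb => ?_, fun b hb => ?_⟩
  · rcases lt_or_ge b 0 with hb0 | hb0
    · exact Eventually.of_forall fun N => hb0.trans_le (hF N a).1
    obtain ⟨q, hbq, hqa⟩ := exists_rat_btwn hb
    filter_upwards [(tendsto_order.1 (hq q ⟨hb0.trans hbq.le, hqa.le.trans ha.2⟩)).1 b hbq]
      with N hN using hN.trans_le (hmono N hqa.le)
  · rcases le_or_gt b 1 with hb1 | hb1
    · obtain ⟨q, haq, hqb⟩ := exists_rat_btwn hb
      filter_upwards [(tendsto_order.1 (hq q ⟨ha.1.trans haq.le, hqb.le.trans hb1⟩)).2 b hqb]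
        with N hN using (hmono N haq.le).trans_lt hN
    · exact Eventually.of_forall fun N => (hF N a).2.trans_lt hb1

section ProductMeasure

variable {α : Type*} [MeasurableSpace α] (ν : Measure α) [IsProbabilityMeasure ν]

theorem ae_injective_infinitePi {ι : Type*} [Countable ι] [MeasurableEq α]
    [NullSingletonClass ν] :
    ∀ᵐ x ∂(Measure.infinitePi fun _ : ι => ν), Injective x := by
  have hpair : ∀ i j, ∀ᵐ x ∂(Measure.infinitePi fun _ : ι => ν), x i = x j → i = j := by
    intro i j
    by_cases hij : i = j
    · exact Eventually.of_forall fun _ _ => hij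
    have hdiag :
        (Measure.infinitePi fun _ : ι => ν) ((fun x => (x i, x j)) ⁻¹' Set.diagonal α) = 0 := by
      rw [← Measure.map_apply (by fun_prop) measurableSet_diagonal,
        Measure.infinitePi_map_eval_prod hij, Measure.prod_apply measurableSet_diagonal]
      simp [Set.preimage, Set.diagonal]
    exact measure_mono_null (fun x hx => (Classical.not_imp.1 hx).1) hdiag
  filter_upwards [ae_all_iff.2 fun i => ae_all_iff.2 (hpair i)] with x hx i j using hx i j

theorem ae_tendsto_card_filter_mem_div_infinitePi {B : Set α} [DecidablePred (· ∈ B)]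
    (hB : MeasurableSet B) :
    ∀ᵐ x ∂(Measure.infinitePi fun _ : ℕ => ν),
      Tendsto (fun N : ℕ => (#{k ∈ range N | x k ∈ B} : ℝ) / N) atTop (𝓝 (ν.real B)) := by
  set P := Measure.infinitePi fun _ : ℕ => ν
  set f : α → ℝ := B.indicator 1
  have hf : Measurable f := measurable_const.indicator hB
  have hlaw : ∀ i, P.map (fun x => x i) = ν := Measure.infinitePi_map_eval _
  have hident : ∀ i, IdentDistrib (fun x : ℕ → α => f (x i)) (fun x => f (x 0)) P P := fun i =>
    IdentDistrib.comp (f := fun x : ℕ → α => x i) (g := fun x : ℕ → α => x 0)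
      ⟨(measurable_pi_apply i).aemeasurable, (measurable_pi_apply 0).aemeasurable,
        (hlaw i).trans (hlaw 0).symm⟩ hf
  have hint : Integrable (fun x : ℕ → α => f (x 0)) P :=
    Integrable.comp_measurable (by rw [hlaw]; exact (integrable_const (1 : ℝ)).indicator hB)
      (measurable_pi_apply 0)
  have hmean : ∫ x, f (x 0) ∂P = ν.real B := by
    rw [← integral_map (measurable_pi_apply 0).aemeasurable hf.aestronglyMeasurable, hlaw,
      integral_indicator_one hB]
  have hlln := strong_law_ae_real (fun i (x : ℕ → α) => f (x i)) hint
    (fun i j hij => (iIndepFun_infinitePi fun _ => hf).indepFun hij) hident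
  filter_upwards [hlln] with x hx
  rw [hmean] at hx
  have hsum : ∀ N, ∑ i ∈ range N, f (x i) = #{k ∈ range N | x k ∈ B} := fun N => by
    simp only [f, Set.indicator_apply, Pi.one_apply, Finset.sum_boole]
  simpa only [hsum] using hx

end ProductMeasure

open unitInterval in
theorem ae_tendsto_freqBelow :
    ∀ᵐ x ∂(Measure.infinitePi fun _ : ℕ => (volume : Measure I)),
      ∀ a ∈ I, Tendsto (freqBelow (fun k => x k) · a) atTop (𝓝 a) := by
  have hrat : ∀ q : ℚ, (q : ℝ) ∈ I → ∀ᵐ x ∂(Measure.infinitePi fun _ : ℕ => (volume : Measure I)),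
      Tendsto (freqBelow (fun k => x k) · q) atTop (𝓝 q) := by
    intro q hq
    filter_upwards [ae_tendsto_card_filter_mem_div_infinitePi volume
      (measurableSet_Iio (a := (⟨q, hq⟩ : I)))] with x hx
    simpa [freqBelow, measureReal_def, hq.1, ← Subtype.coe_lt_coe] using hx
  filter_upwards [ae_all_iff.2 fun q => (eventually_imp_distrib_left).2 (hrat q)] with x hx a ha
  exact tendsto_of_monotone_of_tendsto_rat (fun N => monotone_freqBelow _ N)
    (freqBelow_mem_Icc _) hx ha

/-- The combinatorial encoding `J` distinguishes almost all points of the infinite-dimensional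
cube: `J` is injective on a Borel set of full measure. -/
theorem JCode_injective_on_full_measure_set
    (μ : Measure (ℕ → I)) (hμ : IsProductLebesgue μ) :
    ∃ S : Set (ℕ → I), MeasurableSet S ∧ μ Sᶜ = 0 ∧ Set.InjOn JCode S := by
  obtain rfl : μ = Measure.infinitePi fun _ => volume :=
    hμ.unique (Measure.isProjectiveLimit_infinitePi _)
  obtain ⟨S, hS, hSmeas, hSgood⟩ :=
    ((ae_injective_infinitePi volume).and ae_tendsto_freqBelow).exists_measurable_mem
  refine ⟨S, hSmeas, mem_ae_iff.1 hS, fun x hx y hy hxy => ?_⟩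
  obtain ⟨hxinj, hxlim⟩ := hSgood x hx
  obtain ⟨hyinj, hylim⟩ := hSgood y hy
  have hcoe : (fun k => (x k : ℝ)) = fun k => (y k : ℝ) :=
    eq_of_card_filter_lt_eq_of_tendsto_freqBelow (Subtype.val_injective.comp hxinj)
      (Subtype.val_injective.comp hyinj) (fun n => congrArg Fin.val (congrFun hxy n))
      (fun n => hxlim _ (x n).2) (fun n => hylim _ (y n).2)
  exact funext fun n => Subtype.ext (congrFun hcoe n)
end

section
/- Let x, y : ℕ → ℝ be sequences with pairwise distinct coordinates (injective as functions). If t_n(x) = t_n(y) for all n ≥ 1, where t_n(x) = #{k ≤ n : x_k < x_n}, then x and y have the same order relations: for all i, j, x_i < x_j ⟺ y_i < y_j. -/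
/-- `tR x n = #{k < n : x k < x n}` is, in 0-based indexing, the quantity
`t_{n+1}(x) = #{k ≤ n+1 : x_k < x_{n+1}}` of the paper. -/
noncomputable def tR (x : ℕ → ℝ) (n : ℕ) : ℕ :=
  ((Finset.range n).filter fun k => x k < x n).card

/-- If two sequences of reals with pairwise distinct coordinates have the same encoding
`(t_n)`, then they have the same order relations. -/
theorem same_order_of_tR_eq (x y : ℕ → ℝ)
    (hx : Function.Injective x) (hy : Function.Injective y)
    (h : ∀ n : ℕ, tR x n = tR y n) :
    ∀ i j : ℕ, x i < x j ↔ y i < y j := by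
  have key : ∀ n : ℕ, ∀ i j : ℕ, i < n → j < n → (x i < x j ↔ y i < y j) := by
    intro n
    induction n with
    | zero => intro i j hi _; exact absurd hi (Nat.not_lt_zero _)
    | succ n ih =>
      -- Step: the two filtered sets coincide
      have hset : (Finset.range n).filter (fun k => x k < x n)
          = (Finset.range n).filter (fun k => y k < y n) := by
        set A := (Finset.range n).filter (fun k => x k < x n) with hA
        set B := (Finset.range n).filter (fun k => y k < y n) with hB
        have hcard : A.card = B.card := h n
        by_contra hne
        have hAB : ¬ A ⊆ B := by
          intro hsub
          exact hne (Finset.eq_of_subset_of_card_le hsub hcard.ge)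
        have hBA : ¬ B ⊆ A := by
          intro hsub
          exact hne (Finset.eq_of_subset_of_card_le hsub hcard.le).symm
        obtain ⟨k, hkA, hkB⟩ := Finset.not_subset.mp hAB
        obtain ⟨k', hk'B, hk'A⟩ := Finset.not_subset.mp hBA
        simp only [hA, hB, Finset.mem_filter, Finset.mem_range, not_and, not_lt] at hkA hkB hk'B hk'A
        obtain ⟨hkn, hxk⟩ := hkA
        obtain ⟨hk'n, hyk'⟩ := hk'B
        have hyk : y n ≤ y k := hkB hkn
        have hxk' : x n ≤ x k' := hk'A hk'n
        have hxk'ne : x k' ≠ x n := fun e => (Nat.lt_irrefl n) (hx e ▸ hk'n)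
        have hykne : y k ≠ y n := fun e => (Nat.lt_irrefl n) (hy e ▸ hkn)
        have hxx : x k < x k' := lt_of_lt_of_le hxk hxk'
        have hyy : y k < y k' := (ih k k' hkn hk'n).mp hxx
        have : y k' < y k := lt_of_lt_of_le hyk' hyk
        exact absurd hyy (not_lt.mpr this.le)
      have step : ∀ i, i < n → (x i < x n ↔ y i < y n) := by
        intro i hi
        constructor
        · intro hlt
          have : i ∈ (Finset.range n).filter (fun k => x k < x n) := by
            simp [Finset.mem_filter, Finset.mem_range, hi, hlt]
          rw [hset] at this
          exact (Finset.mem_filter.mp this).2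
        · intro hlt
          have : i ∈ (Finset.range n).filter (fun k => y k < y n) := by
            simp [Finset.mem_filter, Finset.mem_range, hi, hlt]
          rw [← hset] at this
          exact (Finset.mem_filter.mp this).2
      intro i j hi hj
      rcases Nat.lt_or_ge i n with hi' | hi'
      · rcases Nat.lt_or_ge j n with hj' | hj'
        · exact ih i j hi' hj'
        · have hjn : j = n := by omega
          subst hjn
          exact step i hi'
      · have hin : i = n := by omega
        subst hin
        rcases Nat.lt_or_ge j i with hj' | hj'
        · have hxne : x j ≠ x i := fun e => (Nat.lt_irrefl i) (hx e ▸ hj')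
          have hyne : y j ≠ y i := fun e => (Nat.lt_irrefl i) (hy e ▸ hj')
          have := step j hj'
          constructor
          · intro hlt
            rcases lt_trichotomy (y i) (y j) with h1 | h1 | h1
            · exact h1
            · exact absurd h1.symm hyne
            · exact absurd hlt (not_lt.mpr ((this.mpr h1).le))
          · intro hlt
            rcases lt_trichotomy (x i) (x j) with h1 | h1 | h1
            · exact h1
            · exact absurd h1.symm hxne
            · exact absurd hlt (not_lt.mpr ((this.mp h1).le))
        · have hji : j = i := by omega
          subst hji
          simp
  intro i j
  exact key (max i j + 1) i j (by omega) (by omega)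
end

section
/- Let x : ℕ → ℝ have pairwise distinct coordinates. Set t_n(x) = #{k ≤ n : x_k < x_n} and d_n(x) = #{k : 2 ≤ k ≤ n, x_k < x_1}. Then for every n ≥ 1: x_{n+1} < x_1 if and only if t_{n+1}(x) ≤ d_n(x). (Thus the 'special' positions of the encoding sequence, defined by the recursion t_{n+1} ≤ d_n, are exactly the positions n+1 with x_{n+1} < x_1.) -/
/-- `dR x n = #{k ∈ [1, n) : x k < x 0}` is, in 0-based indexing, the quantity
`d_n(x) = #{k : 2 ≤ k ≤ n, x_k < x_1}` of the paper (so `dR x 1 = 0`). -/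
noncomputable def dR (x : ℕ → ℝ) (n : ℕ) : ℕ :=
  ((Finset.Ico 1 n).filter fun k => x k < x 0).card

/-- For a sequence `x` of pairwise distinct reals: in 0-based indexing, for every `n ≥ 1`,
`x_{n+1} < x_1` if and only if `t_{n+1}(x) ≤ d_n(x)`; i.e. the 'special' positions of the
encoding sequence are exactly the positions with `x n < x 0`. -/
theorem special_iff_lt_first (x : ℕ → ℝ) (hx : Function.Injective x) :
    ∀ n : ℕ, 1 ≤ n → (x n < x 0 ↔ tR x n ≤ dR x n) := by
  intro n hn
  constructor
  · intro h
    apply Finset.card_le_card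
    intro k hk
    simp only [Finset.mem_filter, Finset.mem_range, Finset.mem_Ico] at hk ⊢
    obtain ⟨hkn, hlt⟩ := hk
    have hk0 : k ≠ 0 := by
      rintro rfl
      exact absurd (hlt.trans h) (lt_irrefl _)
    exact ⟨⟨Nat.one_le_iff_ne_zero.mpr hk0, hkn⟩, hlt.trans h⟩
  · intro h
    by_contra hlt
    have hne : x 0 ≠ x n := fun he => (hx he ▸ hn).not_gt Nat.zero_lt_one
    have h0n : x 0 < x n := lt_of_le_of_ne (not_lt.mp hlt) hne
    have hsub : insert 0 ((Finset.Ico 1 n).filter fun k => x k < x 0)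
        ⊆ (Finset.range n).filter fun k => x k < x n := by
      intro k hk
      simp only [Finset.mem_insert, Finset.mem_filter, Finset.mem_Ico,
        Finset.mem_range] at hk ⊢
      rcases hk with rfl | ⟨⟨_, hkn⟩, hklt⟩
      · exact ⟨hn, h0n⟩
      · exact ⟨hkn, hklt.trans h0n⟩
    have h0 : 0 ∉ (Finset.Ico 1 n).filter fun k => x k < x 0 := by
      simp
    have := Finset.card_le_card hsub
    rw [Finset.card_insert_of_notMem h0] at this
    have : dR x n + 1 ≤ tR x n := this
    omega
end

section
/- Define the transfer Λ : 𝔐 → 𝔐 on the triangular compact set 𝔐 = ∏_{n≥1}{0,…,n−1} as follows: given t = (t_n) ∈ 𝔐, set d_1(t) = 0 and recursively d_{n+1}(t) = d_n(t) + 1 if t_{n+1} ≤ d_n(t) (position n+1 is 'special'), d_{n+1}(t) = d_n(t) otherwise; then Λ(t)_n = t_{n+1} if t_{n+1} ≤ d_n(t), and Λ(t)_n = t_{n+1} − 1 otherwise. Then for every sequence x : ℕ → [0,1] with pairwise distinct coordinates, Λ(J(x)) = J(Sx), where J(x) = (t_n(x))_{n≥1} with t_n(x) = #{k ≤ n : x_k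 < x_n} and S is the one-sided shift (Sx)_k = x_{k+1}. -/
open MeasureTheory unitInterval

/-- The recursively defined sequence `d_n(t)` of the paper (in 0-based indexing,
`dM t m` is the paper's `d_{m+1}(t)`): `d_1(t) = 0`, and `d_{n+1}(t) = d_n(t) + 1` if
position `n+1` is special (`t_{n+1} ≤ d_n(t)`), `d_{n+1}(t) = d_n(t)` otherwise. -/
def dM (t : ∀ n : ℕ, Fin (n + 1)) : ℕ → ℕ
  | 0 => 0
  | n + 1 => if (t (n + 1) : ℕ) ≤ dM t n then dM t n + 1 else dM t n

theorem dM_le (t : ∀ n : ℕ, Fin (n + 1)) : ∀ n, dM t n ≤ n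
  | 0 => le_refl 0
  | n + 1 => by
    unfold dM
    split
    · exact Nat.succ_le_succ (dM_le t n)
    · exact (dM_le t n).trans (Nat.le_succ n)

/-- The transfer `Λ : 𝔐 → 𝔐` on the triangular compact set (in 0-based indexing,
`transferM t m` is the paper's `Λ(t)_{m+1}`): `Λ(t)_n = t_{n+1}` if `t_{n+1}` is special
(`t_{n+1} ≤ d_n(t)`), and `Λ(t)_n = t_{n+1} - 1` otherwise. -/
def transferM (t : ∀ n : ℕ, Fin (n + 1)) (m : ℕ) : Fin (m + 1) :=
  if h : (t (m + 1) : ℕ) ≤ dM t m then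
    ⟨(t (m + 1) : ℕ), Nat.lt_succ_of_le (h.trans (dM_le t m))⟩
  else
    ⟨(t (m + 1) : ℕ) - 1,
      Nat.lt_succ_of_le (Nat.sub_le_sub_right (Nat.lt_succ_iff.mp (t (m + 1)).isLt) 1)⟩

/-!
Write `S x` for the shifted sequence and `b_n = #{k < n : x_{k+1} < x_0}` for the number of
later coordinates lying below the head `x_0`. Dropping `x_0` changes the code of `x_{n+1}` by
one exactly when `x_0 < x_{n+1}`, so `t_{n+1}(x) = t_n(S x) + [x_0 < x_{n+1}]`. Comparing the
two counts shows that `t_{n+1}(x) ≤ b_n` holds exactly when `x_{n+1} < x_0`; hence `b` obeys the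
recursion defining `d(J x)`, the special positions are those with `x_{n+1} < x_0`, and the two
branches of the transfer undo the correction `[x_0 < x_{n+1}]`.
-/

section

variable (x : ℕ → I)

noncomputable def belowHead (n : ℕ) : ℕ :=
  ((Finset.range n).filter fun k => (x (k + 1) : ℝ) < (x 0 : ℝ)).card

lemma JCode_val (n : ℕ) : (JCode x n : ℕ) = tCode x n := rfl

lemma tCode_succ (n : ℕ) :
    tCode x (n + 1) =
      tCode (fun k => x (k + 1)) n + if (x 0 : ℝ) < (x (n + 1) : ℝ) then 1 else 0 := by
  simp only [tCode, Finset.card_filter, Finset.sum_range_succ']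

lemma belowHead_succ (n : ℕ) :
    belowHead x (n + 1) = belowHead x n + if (x (n + 1) : ℝ) < (x 0 : ℝ) then 1 else 0 := by
  simp only [belowHead, Finset.card_filter, Finset.sum_range_succ]

variable {x}

lemma tCode_shift_le_belowHead {n : ℕ} (h : (x (n + 1) : ℝ) < (x 0 : ℝ)) :
    tCode (fun k => x (k + 1)) n ≤ belowHead x n :=
  Finset.card_le_card <| Finset.monotone_filter_right _ fun _ _ hk => hk.trans h

lemma belowHead_le_tCode_shift {n : ℕ} (h : (x 0 : ℝ) < (x (n + 1) : ℝ)) :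
    belowHead x n ≤ tCode (fun k => x (k + 1)) n :=
  Finset.card_le_card <| Finset.monotone_filter_right _ fun _ _ hk => hk.trans h

lemma tCode_succ_le_belowHead_iff {n : ℕ} (hne : (x (n + 1) : ℝ) ≠ (x 0 : ℝ)) :
    tCode x (n + 1) ≤ belowHead x n ↔ (x (n + 1) : ℝ) < (x 0 : ℝ) := by
  rw [tCode_succ]
  rcases hne.lt_or_gt with h | h
  · simpa [h.not_gt, h] using tCode_shift_le_belowHead h
  · simpa [h, h.not_gt] using belowHead_le_tCode_shift h

lemma dM_JCode (hne : ∀ n, (x (n + 1) : ℝ) ≠ (x 0 : ℝ)) : ∀ n, dM (JCode x) n = belowHead x n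
  | 0 => rfl
  | n + 1 => by
    rw [dM, dM_JCode hne n, belowHead_succ, JCode_val]
    simp only [tCode_succ_le_belowHead_iff (hne n)]
    split_ifs <;> rfl

end

lemma transferM_val (t : ∀ n : ℕ, Fin (n + 1)) (m : ℕ) :
    (transferM t m : ℕ) =
      if (t (m + 1) : ℕ) ≤ dM t m then (t (m + 1) : ℕ) else (t (m + 1) : ℕ) - 1 := by
  unfold transferM
  split_ifs <;> rfl

/-- The transfer `Λ` is the combinatorial image of the one-sided shift `S`:
`Λ(J(x)) = J(Sx)` for every sequence `x` in `[0,1]` with pairwise distinct coordinates. -/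
theorem transferM_JCode (x : ℕ → I) (hx : Function.Injective x) :
    transferM (JCode x) = JCode (fun k => x (k + 1)) := by
  have hne : ∀ n, (x (n + 1) : ℝ) ≠ (x 0 : ℝ) := fun n h =>
    n.succ_ne_zero (hx (Subtype.coe_injective h))
  funext m
  apply Fin.ext
  rw [transferM_val, dM_JCode hne, JCode_val, JCode_val]
  simp only [tCode_succ_le_belowHead_iff (hne m)]
  rcases (hne m).lt_or_gt with h | h <;> simp [tCode_succ, h, h.not_gt]
end
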